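/- Let z ∈ [0,1] and let (Z_n) be the BEC Bhattacharyya process started at z. Then for μ-almost every ω ∈ Ω, the limit Z_∞(ω) := lim_{n→∞} Z_n(ω) exists and lies in {0,1}; moreover μ{ω : Z_n(ω) → 1} = z and μ{ω : Z_n(ω) → 0} = 1 − z. -/

import Mathlib

open MeasureTheory Filter Topology

/-- The BEC polar maps: `t₁(x) = x²`, `t₀(x) = 2x - x²`. -/
noncomputable def becT (b : Bool) (x : ℝ) : ℝ := if b then x ^ 2 else 2 * x - x ^ 2

/-- The BEC Bhattacharyya process started at `z`. -/
noncomputable def becZ (z : ℝ) : ℕ → (ℕ → Bool) → ℝ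
  | 0, _ => z
  | n + 1, ω => becT (ω n) (becZ z n ω)

/-- `μ` is the i.i.d. Bernoulli(1/2) product measure on `{0,1}^ℕ`,
characterized by its values on cylinder sets. -/
def IsBernoulliHalf (μ : Measure (ℕ → Bool)) : Prop :=
  ∀ (n : ℕ) (b : Fin n → Bool), μ {ω | ∀ i : Fin n, ω i = b i} = (2 : ENNReal)⁻¹ ^ n


/-! The potential `√(x (1 - x))` contracts on average by the factor `√3 / 2` under one step of
the process, so `∑ₙ E √(Zₙ (1 - Zₙ)) < ∞` and hence `∑ₙ Zₙ (1 - Zₙ) < ∞` almost surely. Since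
`|Zₙ₊₁ - Zₙ| = Zₙ (1 - Zₙ)`, almost every path is then Cauchy, and its limit `L` satisfies
`L (1 - L) = 0`. As `E Zₙ = z` for every `n`, dominated convergence gives `μ (Zₙ → 1) = z`.
All expectations of functions of `Zₙ` are finite averages over the `2ⁿ` words of length `n`,
since each cylinder of length `n` has measure `2⁻ⁿ`. -/

open Real Set

theorem tendsto_nhds_iff_eq_of_tendsto {X Y : Type*} [TopologicalSpace X] [T2Space X] {f : Y → X}
    {l : Filter Y} [l.NeBot] {a b : X} (ha : Tendsto f l (𝓝 a)) : Tendsto f l (𝓝 b) ↔ b = a :=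
  ⟨fun hb => tendsto_nhds_unique hb ha, fun h => h ▸ ha⟩

theorem exists_tendsto_zero_or_one_of_summable {x : ℕ → ℝ}
    (hsum : Summable fun n => x n * (1 - x n))
    (hstep : ∀ n, dist (x n) (x (n + 1)) ≤ |x n * (1 - x n)|) :
    ∃ L ∈ ({0, 1} : Set ℝ), Tendsto x atTop (𝓝 L) := by
  obtain ⟨L, hL⟩ := cauchySeq_tendsto_of_complete <| cauchySeq_of_summable_dist <|
    hsum.abs.of_nonneg_of_le (fun _ => dist_nonneg) hstep
  have hL0 : L * (1 - L) = 0 :=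
    tendsto_nhds_unique (hL.mul (tendsto_const_nhds.sub hL)) hsum.tendsto_atTop_zero
  refine ⟨L, ?_, hL⟩
  rcases mul_eq_zero.mp hL0 with h | h
  · exact Or.inl h
  · exact Or.inr (sub_eq_zero.mp h).symm

section Convergence

variable {Ω : Type*} [MeasurableSpace Ω] {μ : Measure Ω}

theorem ae_summable_of_summable_integral {f : ℕ → Ω → ℝ} (hf : ∀ n, Integrable (f n) μ)
    (hf_nonneg : ∀ n ω, 0 ≤ f n ω) (hsum : Summable fun n => ∫ ω, f n ω ∂μ) :
    ∀ᵐ ω ∂μ, Summable fun n => f n ω := by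
  have hnorm : ∀ n, eLpNorm (f n) 1 μ = ENNReal.ofReal (∫ ω, f n ω ∂μ) := fun n => by
    rw [eLpNorm_one_eq_lintegral_enorm, ← ofReal_integral_norm_eq_lintegral_enorm (hf n)]
    simp only [Real.norm_of_nonneg (hf_nonneg n _)]
  have htsum : ∑' n, eLpNorm (f n) 1 μ ≠ ⊤ := by
    simp only [hnorm]
    rw [← ENNReal.ofReal_tsum_of_nonneg (fun n => integral_nonneg (hf_nonneg n)) hsum]
    exact ENNReal.ofReal_ne_top
  filter_upwards [summable_norm_of_tsum_eLpNorm_ne_top le_rfl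
    (fun n => (hf n).aestronglyMeasurable) htsum] with ω hω
  exact hω.of_norm

variable {X : ℕ → Ω → ℝ}

theorem measure_tendsto_one_eq_of_integral_eq [IsFiniteMeasure μ] {z : ℝ}
    (hX : ∀ n, Measurable (X n)) (hX01 : ∀ n ω, X n ω ∈ Icc (0 : ℝ) 1)
    (hmean : ∀ n, ∫ ω, X n ω ∂μ = z)
    (hlim : ∀ᵐ ω ∂μ, ∃ L ∈ ({0, 1} : Set ℝ), Tendsto (X · ω) atTop (𝓝 L)) :
    μ {ω | Tendsto (X · ω) atTop (𝓝 1)} = ENNReal.ofReal z := by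
  set G := {ω | Tendsto (X · ω) atTop (𝓝 1)}
  have hG : MeasurableSet G := measurableSet_tendsto _ hX
  have hind : ∀ᵐ ω ∂μ, Tendsto (X · ω) atTop (𝓝 (G.indicator 1 ω)) := by
    filter_upwards [hlim] with ω ⟨L, hL, hω⟩
    have hmem : ω ∈ G ↔ 1 = L := tendsto_nhds_iff_eq_of_tendsto hω
    rcases hL with rfl | rfl
    · rwa [Set.indicator_of_notMem (by simp [hmem])]
    · rwa [Set.indicator_of_mem (by simp [hmem]), Pi.one_apply]
  have hDCT := tendsto_integral_of_dominated_convergence (fun _ => 1)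
    (fun n => (hX n).aestronglyMeasurable) (integrable_const 1)
    (fun n => ae_of_all _ fun ω => by
      rw [Real.norm_of_nonneg (hX01 n ω).1]; exact (hX01 n ω).2) hind
  simp only [hmean, integral_indicator_one hG] at hDCT
  rw [← ofReal_measureReal, tendsto_nhds_unique hDCT tendsto_const_nhds]

theorem measure_tendsto_zero_eq_one_sub [IsProbabilityMeasure μ] {z : ℝ}
    (hX : ∀ n, Measurable (X n))
    (hlim : ∀ᵐ ω ∂μ, ∃ L ∈ ({0, 1} : Set ℝ), Tendsto (X · ω) atTop (𝓝 L))
    (hone : μ {ω | Tendsto (X · ω) atTop (𝓝 1)} = ENNReal.ofReal z) (hz : 0 ≤ z) :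
    μ {ω | Tendsto (X · ω) atTop (𝓝 0)} = ENNReal.ofReal (1 - z) := by
  set G : Set Ω := {ω | Tendsto (X · ω) atTop (𝓝 1)}
  have hcompl : {ω | Tendsto (X · ω) atTop (𝓝 0)} =ᵐ[μ] (Gᶜ : Set Ω) := by
    refine Filter.eventuallyEq_set.mpr ?_
    filter_upwards [hlim] with ω ⟨L, hL, hω⟩
    change Tendsto _ _ _ ↔ ¬ Tendsto _ _ _
    rw [tendsto_nhds_iff_eq_of_tendsto hω, tendsto_nhds_iff_eq_of_tendsto hω]
    rcases hL with rfl | rfl <;> norm_num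
  have hG : MeasurableSet G := measurableSet_tendsto _ hX
  rw [measure_congr hcompl, prob_compl_eq_one_sub hG, hone,
    ENNReal.ofReal_sub 1 hz, ENNReal.ofReal_one]

end Convergence

theorem becT_mem_Icc {x : ℝ} (hx : x ∈ Icc (0 : ℝ) 1) (b : Bool) : becT b x ∈ Icc (0 : ℝ) 1 := by
  obtain ⟨h0, h1⟩ := hx
  cases b <;> simp only [becT, Bool.false_eq_true, if_true, if_false] <;> constructor <;> nlinarith

theorem becZ_mem_Icc {z : ℝ} (hz : z ∈ Icc (0 : ℝ) 1) (n : ℕ) (ω : ℕ → Bool) :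
    becZ z n ω ∈ Icc (0 : ℝ) 1 := by
  induction n with
  | zero => exact hz
  | succ n ih => exact becT_mem_Icc ih _

theorem dist_becT (b : Bool) (x : ℝ) : dist x (becT b x) = |x * (1 - x)| := by
  rw [Real.dist_eq]
  cases b
  · rw [← abs_neg]; simp only [becT, Bool.false_eq_true, if_false]; ring_nf
  · simp only [becT, if_true]; ring_nf

theorem average_sqrt_mul_one_sub_becT_le {x : ℝ} (hx : x ∈ Icc (0 : ℝ) 1) :
    (√(becT false x * (1 - becT false x)) + √(becT true x * (1 - becT true x))) / 2 ≤
      √3 / 2 * √(x * (1 - x)) := by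
  obtain ⟨h0, h1⟩ := hx
  set u := x * (1 - x)
  have hu : 0 ≤ u := mul_nonneg h0 (by linarith)
  have ha : 0 ≤ (1 - x) * (2 - x) := by nlinarith
  have hb : 0 ≤ x * (1 + x) := by nlinarith
  have e0 : becT false x * (1 - becT false x) = u * ((1 - x) * (2 - x)) := by
    simp only [becT, Bool.false_eq_true, if_false, u]; ring
  have e1 : becT true x * (1 - becT true x) = u * (x * (1 + x)) := by
    simp only [becT, if_true, u]; ring
  -- `(1 - x)(2 - x) · x(1 + x) = u (2 + u) ≤ ((1 + 2u) / 2)²` because `4u ≤ 1`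
  have hab : √((1 - x) * (2 - x)) * √(x * (1 + x)) ≤ (1 + 2 * u) / 2 := by
    rw [← Real.sqrt_mul ha]
    exact Real.sqrt_le_iff.mpr ⟨by positivity, by nlinarith [sq_nonneg (2 * x - 1)]⟩
  have hsum : √((1 - x) * (2 - x)) + √(x * (1 + x)) ≤ √3 := by
    rw [Real.le_sqrt (by positivity) (by norm_num)]
    nlinarith [Real.sq_sqrt ha, Real.sq_sqrt hb]
  rw [e0, e1, Real.sqrt_mul hu, Real.sqrt_mul hu, ← mul_add]
  nlinarith [Real.sqrt_nonneg u]

section BernoulliExpectations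

variable {μ : Measure (ℕ → Bool)}

theorem measurable_restrict_fin (n : ℕ) : Measurable fun (ω : ℕ → Bool) (i : Fin n) => ω i :=
  measurable_pi_lambda _ fun i => measurable_pi_apply (i : ℕ)

theorem integrable_comp_restrict_fin [IsFiniteMeasure μ] {n : ℕ} (G : (Fin n → Bool) → ℝ) :
    Integrable (fun ω => G fun i => ω i) μ :=
  Integrable.of_finite.comp_measurable (measurable_restrict_fin n)

theorem IsBernoulliHalf.integral_comp_restrict_fin [IsFiniteMeasure μ] (hμ : IsBernoulliHalf μ)
    {n : ℕ} (G : (Fin n → Bool) → ℝ) :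
    ∫ ω, G (fun i => ω i) ∂μ = (∑ b, G b) / 2 ^ n := by
  have hmap : ∀ b, (μ.map fun ω (i : Fin n) => ω i).real {b} = (2⁻¹ : ℝ) ^ n := fun b => by
    rw [measureReal_def, Measure.map_apply (measurable_restrict_fin n) (measurableSet_singleton b)]
    have hcyl :
        (fun (ω : ℕ → Bool) (i : Fin n) => ω i) ⁻¹' {b} = {ω | ∀ i : Fin n, ω i = b i} := by
      ext ω; simp [funext_iff]
    simp [hcyl, hμ n b]
  rw [← integral_map (measurable_restrict_fin n).aemeasurable
    (measurable_of_finite G).aestronglyMeasurable, integral_fintype Integrable.of_finite]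
  simp only [hmap, smul_eq_mul, ← Finset.mul_sum]
  rw [inv_pow, inv_mul_eq_div]

noncomputable def becZWord (z : ℝ) : (n : ℕ) → (Fin n → Bool) → ℝ
  | 0, _ => z
  | n + 1, b => becT (b (Fin.last n)) (becZWord z n (Fin.init b))

theorem becZ_eq_becZWord (z : ℝ) (n : ℕ) (ω : ℕ → Bool) :
    becZ z n ω = becZWord z n fun i => ω i := by
  induction n with
  | zero => rfl
  | succ n ih => exact congrArg (becT (ω n)) ih

theorem measurable_becZ (z : ℝ) (n : ℕ) : Measurable (becZ z n) := by
  simp only [funext (becZ_eq_becZWord z n)]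
  exact (measurable_of_finite _).comp (measurable_restrict_fin n)

theorem sum_becZWord_succ (φ : ℝ → ℝ) (z : ℝ) (n : ℕ) :
    ∑ b, φ (becZWord z (n + 1) b) =
      ∑ b, (φ (becT false (becZWord z n b)) + φ (becT true (becZWord z n b))) := by
  rw [← (Fin.snocEquiv fun _ => Bool).sum_comp, Fintype.sum_prod_type, Fintype.sum_bool,
    ← Finset.sum_add_distrib]
  simp [Fin.snocEquiv, becZWord, add_comm]

theorem integrable_comp_becZ [IsFiniteMeasure μ] (φ : ℝ → ℝ) (z : ℝ) (n : ℕ) :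
    Integrable (fun ω => φ (becZ z n ω)) μ := by
  simp only [becZ_eq_becZWord]
  exact integrable_comp_restrict_fin fun b => φ (becZWord z n b)

theorem integral_comp_becZ_succ [IsFiniteMeasure μ] (hμ : IsBernoulliHalf μ) (φ : ℝ → ℝ) (z : ℝ)
    (n : ℕ) :
    ∫ ω, φ (becZ z (n + 1) ω) ∂μ =
      ∫ ω, (φ (becT false (becZ z n ω)) + φ (becT true (becZ z n ω))) / 2 ∂μ := by
  calc ∫ ω, φ (becZ z (n + 1) ω) ∂μ = (∑ b, φ (becZWord z (n + 1) b)) / 2 ^ (n + 1) := by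
        simpa only [becZ_eq_becZWord] using
          hμ.integral_comp_restrict_fin fun b => φ (becZWord z (n + 1) b)
    _ = (∑ b, (φ (becT false (becZWord z n b)) + φ (becT true (becZWord z n b))) / 2) /
          2 ^ n := by
        rw [sum_becZWord_succ, ← Finset.sum_div, pow_succ, div_div, mul_comm]
    _ = _ := by
        simpa only [becZ_eq_becZWord] using (hμ.integral_comp_restrict_fin fun b =>
          (φ (becT false (becZWord z n b)) + φ (becT true (becZWord z n b))) / 2).symm

theorem integral_becZ [IsProbabilityMeasure μ] (hμ : IsBernoulliHalf μ) (z : ℝ) (n : ℕ) :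
    ∫ ω, becZ z n ω ∂μ = z := by
  induction n with
  | zero => simp [becZ]
  | succ n ih =>
    calc ∫ ω, becZ z (n + 1) ω ∂μ
        = ∫ ω, (becT false (becZ z n ω) + becT true (becZ z n ω)) / 2 ∂μ :=
          integral_comp_becZ_succ hμ (fun x => x) z n
      _ = ∫ ω, becZ z n ω ∂μ := by
          congr with ω
          simp only [becT, Bool.false_eq_true, if_true, if_false]
          ring
      _ = z := ih

theorem integral_comp_becZ_le [IsProbabilityMeasure μ] (hμ : IsBernoulliHalf μ) {φ : ℝ → ℝ}
    {c : ℝ} (hc : 0 ≤ c)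
    (hφ : ∀ x ∈ Icc (0 : ℝ) 1, (φ (becT false x) + φ (becT true x)) / 2 ≤ c * φ x)
    {z : ℝ} (hz : z ∈ Icc (0 : ℝ) 1) (n : ℕ) :
    ∫ ω, φ (becZ z n ω) ∂μ ≤ c ^ n * φ z := by
  induction n with
  | zero => simp [becZ]
  | succ n ih =>
    calc ∫ ω, φ (becZ z (n + 1) ω) ∂μ
        = ∫ ω, (φ (becT false (becZ z n ω)) + φ (becT true (becZ z n ω))) / 2 ∂μ :=
          integral_comp_becZ_succ hμ φ z n
      _ ≤ ∫ ω, c * φ (becZ z n ω) ∂μ :=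
          integral_mono
            (integrable_comp_becZ (fun x => (φ (becT false x) + φ (becT true x)) / 2) z n)
            (integrable_comp_becZ (c * φ ·) z n) fun ω => hφ _ (becZ_mem_Icc hz n ω)
      _ = c * ∫ ω, φ (becZ z n ω) ∂μ := integral_const_mul c _
      _ ≤ c * (c ^ n * φ z) := by gcongr
      _ = c ^ (n + 1) * φ z := by ring

theorem ae_summable_becZ_mul_one_sub [IsProbabilityMeasure μ] (hμ : IsBernoulliHalf μ) {z : ℝ}
    (hz : z ∈ Icc (0 : ℝ) 1) : ∀ᵐ ω ∂μ, Summable fun n => becZ z n ω * (1 - becZ z n ω) := by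
  have hc0 : 0 ≤ √3 / 2 := by positivity
  have hc : √3 / 2 < 1 := by
    rw [div_lt_one two_pos, Real.sqrt_lt' two_pos]
    norm_num
  have hsum : Summable fun n => ∫ ω, √(becZ z n ω * (1 - becZ z n ω)) ∂μ :=
    Summable.of_nonneg_of_le (fun n => integral_nonneg fun ω => Real.sqrt_nonneg _)
      (integral_comp_becZ_le (φ := fun x => √(x * (1 - x))) hμ hc0
        (fun _ hx => average_sqrt_mul_one_sub_becT_le hx) hz)
      ((summable_geometric_of_lt_one hc0 hc).mul_right _)
  filter_upwards [ae_summable_of_summable_integral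
    (fun n => integrable_comp_becZ (fun x => √(x * (1 - x))) z n)
    (fun n ω => Real.sqrt_nonneg _) hsum] with ω hω
  refine hω.of_nonneg_of_le (fun n => ?_) (fun n => ?_)
  all_goals obtain ⟨h0, h1⟩ := becZ_mem_Icc hz n ω
  · exact mul_nonneg h0 (by linarith)
  · exact Real.le_sqrt_self_iff.mpr (by nlinarith)

end BernoulliExpectations

theorem stmt19 (μ : Measure (ℕ → Bool)) [IsProbabilityMeasure μ] (hμ : IsBernoulliHalf μ)
    (z : ℝ) (hz : z ∈ Set.Icc (0:ℝ) 1) :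
    (∀ᵐ ω ∂μ, ∃ L ∈ ({0, 1} : Set ℝ),
        Tendsto (fun n => becZ z n ω) atTop (nhds L)) ∧
    μ {ω | Tendsto (fun n => becZ z n ω) atTop (nhds 1)} = ENNReal.ofReal z ∧
    μ {ω | Tendsto (fun n => becZ z n ω) atTop (nhds 0)} = ENNReal.ofReal (1 - z) := by
  have hlim : ∀ᵐ ω ∂μ, ∃ L ∈ ({0, 1} : Set ℝ), Tendsto (fun n => becZ z n ω) atTop (nhds L) := by
    filter_upwards [ae_summable_becZ_mul_one_sub hμ hz] with ω hω
    exact exists_tendsto_zero_or_one_of_summable hω fun n => (dist_becT _ _).le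
  have hone := measure_tendsto_one_eq_of_integral_eq (measurable_becZ z)
    (becZ_mem_Icc hz) (integral_becZ hμ z) hlim
  exact ⟨hlim, hone, measure_tendsto_zero_eq_one_sub (measurable_becZ z) hlim hone hz.1⟩
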